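/- Let k ≥ 2, let M be a simple matroid of rank k+1, and let (X₂,…,X_k) be an optimal k-stratification of M. Let i ∈ {2,…,k−1}. If X_i is a rank-i flat of M and |X_{i−1}| + 1 < |X_i|/k, then (X_{i+1}∖X_i, …, X_k∖X_i) is an optimal (k+1−i)-stratification of the matroid (M ÷ X_i) \ X_i obtained from the complete principal truncation of X_i by deleting X_i. -/

import Mathlib

/-!
In `N = M ÷ Xᵢ` every set `A` either keeps its rank or satisfies `r_M(A ∪ Xᵢ) = r_N(A) + i - 1`.

Let `l > i`. A cover of `X_l` witnessing its `l`-degeneracy has at most `k` flats, so by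
`|Xᵢ| > k (|X_{i-1}| + 1)` one of them, `F`, meets `Xᵢ` in more than `|X_{i-1}| + 1` points. By
simplicity and optimality of `X_{i-1}` these points span `Xᵢ`, hence `Xᵢ ⊆ F`, and `F \ Xᵢ` has
rank at most `r(F) - (i - 1)` in `N`. Removing `Xᵢ` from the cover therefore saves `i - 1`, and
`X_l \ Xᵢ` is `(l - i + 1)`-degenerate in `N \ Xᵢ`.

Conversely, in an `(l - i + 1)`-degenerate cover of `Y ⊆ X_{l+1} \ Xᵢ` in `N \ Xᵢ`, the flats
whose rank drops are merged with `Xᵢ`; by submodularity the merged set pays `i - 1` once. So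
`Y ∪ Xᵢ` is `l`-degenerate in `M`, and optimality of `X_l` bounds `|Y| + |Xᵢ| ≤ |X_l|`.
-/

open Set
open scoped Classical

namespace MatroidPaper

variable {α : Type*}

/-- The rank of a set in a matroid: the supremum of cardinalities of independent subsets. -/
noncomputable def rkS (M : Matroid α) (X : Set α) : ℕ :=
  sSup {n | ∃ I, M.Indep I ∧ I ⊆ X ∧ I.ncard = n}

/-- The rank of a matroid. -/
noncomputable def rk (M : Matroid α) : ℕ := rkS M M.E

/-- A hyperplane: a flat of rank `rk M - 1`. -/
def Hyp (M : Matroid α) (H : Set α) : Prop := M.IsFlat H ∧ rkS M H = rk M - 1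

/-- Two sets are skew if the rank of their union is the sum of their ranks. -/
def SkewSets (M : Matroid α) (X Y : Set α) : Prop :=
  rkS M (X ∪ Y) = rkS M X + rkS M Y

/-- A simple matroid: every subset of the ground set with at most two elements is independent. -/
def SimpleM (M : Matroid α) : Prop := ∀ X ⊆ M.E, X.ncard ≤ 2 → M.Indep X

/-- A real-representable matroid. -/
def RealRep (M : Matroid α) : Prop :=
  ∃ (n : ℕ) (φ : α → (Fin n → ℝ)), ∀ I, I ⊆ M.E →
    (M.Indep I ↔ LinearIndependent ℝ (fun x : I => φ x))

/-- A matroid is `k`-degenerate if it has rank at most one or its ground set is covered by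
flats of rank at least two with `∑ (r(Fᵢ) - 1) ≤ k - 1`. -/
def Degen (M : Matroid α) (k : ℕ) : Prop :=
  rk M ≤ 1 ∨ ∃ (t : ℕ) (F : Fin t → Set α),
    (∀ i, M.IsFlat (F i) ∧ 2 ≤ rkS M (F i)) ∧
    M.E ⊆ ⋃ i, F i ∧ ∑ i, (rkS M (F i) - 1) ≤ k - 1

/-- A set `X` is `k`-degenerate in `M` if the restriction `M|X` is a `k`-degenerate matroid. -/
def DegenSet (M : Matroid α) (X : Set α) (k : ℕ) : Prop := Degen (M.restrict X) k

/-- `N` is the (one-fold) principal truncation of `F` in `M`. -/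
noncomputable def IsPT (M : Matroid α) (F : Set α) (N : Matroid α) : Prop :=
  N.E = M.E ∧ ∀ X ⊆ M.E,
    rkS N X = if F ⊆ M.closure X then rkS M X - 1 else rkS M X

/-- `N` is the complete principal truncation `M ÷ F` of `F` in `M`. -/
def IsCPT (M : Matroid α) (F : Set α) (N : Matroid α) : Prop :=
  N.E = M.E ∧ ∀ X ⊆ M.E,
    rkS N X = min (rkS M X + (rkS M F - 1)) (rkS M (X ∪ F)) - (rkS M F - 1)

open scoped Matroid

section Rank

variable {M : Matroid α} {I X Y Z : Set α}

lemma cast_rkS [M.RankFinite] (X : Set α) : (rkS M X : ℕ∞) = M.eRk X := by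
  have hmem : ∀ n : ℕ, n ∈ {n | ∃ J, M.Indep J ∧ J ⊆ X ∧ J.ncard = n} ↔ (n : ℕ∞) ≤ M.eRk X := by
    intro n
    rw [Matroid.le_eRk_iff]
    constructor
    · rintro ⟨J, hJ, hJX, rfl⟩
      exact ⟨J, hJX, hJ, hJ.finite.cast_ncard_eq.symm⟩
    · rintro ⟨J, hJX, hJ, hJn⟩
      exact ⟨J, hJ, hJX, by rw [← Nat.cast_inj (R := ℕ∞), hJ.finite.cast_ncard_eq, hJn]⟩
  have hfin : M.eRk X ≠ ⊤ := (M.isRkFinite_set X).eRk_lt_top.ne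
  have hset : {n | ∃ J, M.Indep J ∧ J ⊆ X ∧ J.ncard = n} = Iic (M.eRk X).toNat := by
    ext n
    rw [hmem, mem_Iic, ← ENat.natCast_le_natCast, ENat.natCast_toNat hfin]
  rw [rkS, hset, csSup_Iic, ENat.natCast_toNat hfin]

lemma rkS_mono [M.RankFinite] (h : X ⊆ Y) : rkS M X ≤ rkS M Y := by
  exact_mod_cast (cast_rkS X).trans_le ((M.eRk_mono h).trans (cast_rkS Y).ge)

lemma rkS_union_add_inter_le [M.RankFinite] (X Y : Set α) :
    rkS M (X ∪ Y) + rkS M (X ∩ Y) ≤ rkS M X + rkS M Y := by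
  have h := M.eRk_inter_add_eRk_union_le X Y
  simp only [← cast_rkS] at h
  exact_mod_cast (add_comm _ _).trans_le h

lemma rkS_union_le [M.RankFinite] (X Y : Set α) : rkS M (X ∪ Y) ≤ rkS M X + rkS M Y := by
  have h := M.eRk_union_le_eRk_add_eRk X Y
  simp only [← cast_rkS] at h
  exact_mod_cast h

lemma rkS_closure [M.RankFinite] (X : Set α) : rkS M (M.closure X) = rkS M X := by
  have h := M.eRk_closure_eq X
  simp only [← cast_rkS] at h
  exact_mod_cast h

lemma rkS_indep [M.RankFinite] (hI : M.Indep I) : rkS M I = I.ncard := by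
  have h := hI.eRk_eq_encard
  rw [← cast_rkS, ← hI.finite.cast_ncard_eq] at h
  exact_mod_cast h

lemma rkS_insert_of_notMem_closure [M.RankFinite] {e : α} (he : e ∈ M.E \ M.closure X) :
    rkS M (insert e X) = rkS M X + 1 := by
  have h := Matroid.eRk_insert_eq_add_one he
  simp only [← cast_rkS] at h
  exact_mod_cast h

lemma subset_closure_of_rkS_le [M.RankFinite] (hYX : Y ⊆ X) (hX : X ⊆ M.E)
    (h : rkS M X ≤ rkS M Y) : X ⊆ M.closure Y := by
  rw [(M.isRkFinite_set Y).closure_eq_closure_of_subset_of_eRk_ge_eRk hYX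
    (by rw [← cast_rkS, ← cast_rkS]; exact_mod_cast h)]
  exact M.subset_closure X hX

lemma rkS_restrict (M : Matroid α) (R X : Set α) : rkS (M ↾ R) X = rkS M (X ∩ R) := by
  unfold rkS
  congr 1
  ext n
  simp only [Matroid.restrict_indep_iff, mem_ofPred_eq, subset_inter_iff]
  exact ⟨fun ⟨I, hI, hIX, hn⟩ => ⟨I, hI.1, ⟨hIX, hI.2⟩, hn⟩,
    fun ⟨I, hI, hIX, hn⟩ => ⟨I, ⟨hI, hIX.2⟩, hIX.1, hn⟩⟩

lemma rkS_restrict_of_subset {R : Set α} (M : Matroid α) (hXR : X ⊆ R) :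
    rkS (M ↾ R) X = rkS M X := by
  rw [rkS_restrict, inter_eq_self_of_subset_left hXR]

lemma rkS_restrict_le [M.RankFinite] (R X : Set α) : rkS (M ↾ R) X ≤ rkS M X :=
  (rkS_restrict M R X).trans_le (rkS_mono inter_subset_left)

lemma rkS_union_biUnion_le [M.RankFinite] {ι : Type*} (Z : Set α) (G : ι → Set α)
    (s : Finset ι) :
    rkS M (Z ∪ ⋃ c ∈ s, G c) ≤ rkS M Z + ∑ c ∈ s, (rkS M (Z ∪ G c) - rkS M Z) := by
  induction s using Finset.induction_on with
  | empty => simp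
  | insert a s ha ih =>
    have hunion : Z ∪ ⋃ c ∈ insert a s, G c = (Z ∪ G a) ∪ (Z ∪ ⋃ c ∈ s, G c) := by
      rw [Finset.set_biUnion_insert]; ext; simp only [mem_union]; tauto
    have hsub := rkS_union_add_inter_le (M := M) (Z ∪ G a) (Z ∪ ⋃ c ∈ s, G c)
    have hZ : rkS M Z ≤ rkS M ((Z ∪ G a) ∩ (Z ∪ ⋃ c ∈ s, G c)) :=
      rkS_mono (subset_inter subset_union_left subset_union_left)
    have hZa : rkS M Z ≤ rkS M (Z ∪ G a) := rkS_mono subset_union_left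
    rw [hunion, Finset.sum_insert ha]
    omega

end Rank

section Degen

variable {P : Matroid α} {k : ℕ}

lemma degen_of_rk_le (h : rk P ≤ k) : Degen P k := by
  by_cases h1 : rk P ≤ 1
  · exact Or.inl h1
  rw [rk] at h h1
  exact Or.inr ⟨1, fun _ => P.E, fun _ => ⟨P.ground_isFlat, by dsimp only; omega⟩,
    fun x hx => mem_iUnion.2 ⟨0, hx⟩, by simp only [Fin.sum_univ_one]; omega⟩

lemma degenSet_of_rkS_le {M : Matroid α} {X : Set α} (h : rkS M X ≤ k) : DegenSet M X k :=
  degen_of_rk_le (by rwa [rk, Matroid.restrict_ground_eq, rkS_restrict_of_subset _ subset_rfl])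

lemma degen_of_cover [P.RankFinite] {ι : Type*} (s : Finset ι) (A : ι → Set α)
    (h2 : ∀ c ∈ s, 2 ≤ rkS P (A c)) (hcov : P.E ⊆ ⋃ c ∈ s, A c)
    (hsum : ∑ c ∈ s, (rkS P (A c) - 1) ≤ k - 1) : Degen P k := by
  refine Or.inr ⟨s.card, fun j => P.closure (A (s.equivFin.symm j)),
    fun j => ⟨P.isFlat_closure _, ?_⟩, fun x hx => ?_, ?_⟩
  · rw [rkS_closure]
    exact h2 _ (s.equivFin.symm j).2
  · obtain ⟨c, hc, hxc⟩ := mem_iUnion₂.1 (hcov hx)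
    refine mem_iUnion.2 ⟨s.equivFin ⟨c, hc⟩, ?_⟩
    simpa using P.mem_closure_of_mem' hxc hx
  · simp only [rkS_closure]
    rwa [Fintype.sum_equiv s.equivFin.symm _ (fun c : s => rkS P (A c) - 1) (fun _ => rfl),
      Finset.sum_coe_sort s (fun c => rkS P (A c) - 1)]

lemma exists_superset_rkS_eq_two [P.RankFinite] {A : Set α} (hP : 2 ≤ rk P)
    (hA : rkS P A ≤ 1) : ∃ B, A ⊆ B ∧ rkS P B = 2 := by
  obtain ⟨I, hI⟩ := P.exists_isBasis' A
  obtain ⟨B₀, hB₀, hIB₀⟩ := hI.indep.exists_isBase_superset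
  have hI1 : I.ncard ≤ 1 := by
    rw [← rkS_indep hI.indep]; exact (rkS_mono hI.subset).trans hA
  have hB₀2 : 2 ≤ B₀.ncard := by
    rwa [← rkS_indep hB₀.indep, ← rkS_closure, hB₀.closure_eq]
  obtain ⟨J, hIJ, hJB₀, hJ⟩ := exists_subsuperset_card_eq hIB₀ (by omega) hB₀2
  refine ⟨A ∪ J, subset_union_left, ?_⟩
  have h := hI.eRk_eq_eRk_union J
  rw [union_eq_right.2 hIJ, ← cast_rkS, ← cast_rkS, Nat.cast_inj,
    rkS_indep (hB₀.indep.subset hJB₀), hJ] at h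
  exact h.symm

/-- Pieces of rank at most one are enlarged to rank-two sets, at a cost of one each. -/
lemma degen_of_cover_of_two_le_rk [P.RankFinite] (hP : 2 ≤ rk P) {ι : Type*} (s : Finset ι)
    (A : ι → Set α) (hcov : P.E ⊆ ⋃ c ∈ s, A c)
    (hsum : ∑ c ∈ s, max (rkS P (A c) - 1) 1 ≤ k - 1) : Degen P k := by
  have hB : ∀ c, ∃ B, A c ⊆ B ∧ 2 ≤ rkS P B ∧ rkS P B - 1 ≤ max (rkS P (A c) - 1) 1 := by
    intro c
    by_cases h : 2 ≤ rkS P (A c)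
    · exact ⟨A c, subset_rfl, h, le_max_left _ _⟩
    · obtain ⟨B, hAB, hB⟩ := exists_superset_rkS_eq_two hP (A := A c) (by omega)
      exact ⟨B, hAB, hB.ge, by omega⟩
  choose B hAB hB2 hBle using hB
  exact degen_of_cover s B (fun c _ => hB2 c)
    (hcov.trans (biUnion_mono subset_rfl fun c _ => hAB c))
    ((Finset.sum_le_sum fun c _ => hBle c).trans hsum)

end Degen

lemma SimpleM.rkS_pair {M : Matroid α} [M.RankFinite] (hs : SimpleM M) {x y : α} (hx : x ∈ M.E)
    (hy : y ∈ M.E) (hxy : x ≠ y) : rkS M {x, y} = 2 := by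
  rw [rkS_indep (hs _ (pair_subset hx hy) (ncard_pair hxy).le), ncard_pair hxy]

lemma SimpleM.two_le_rkS {M : Matroid α} [M.Finite] (hs : SimpleM M) {A : Set α} (hA : A ⊆ M.E)
    (h : 1 < A.ncard) : 2 ≤ rkS M A := by
  obtain ⟨x, y, hx, hy, hxy⟩ := (one_lt_ncard_iff (M.ground_finite.subset hA)).1 h
  rw [← hs.rkS_pair (hA hx) (hA hy) hxy]
  exact rkS_mono (pair_subset hx hy)

section CPT

variable {M N : Matroid α} {Z A : Set α}

lemma IsCPT.finite [M.Finite] (hN : IsCPT M Z N) : N.Finite :=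
  ⟨hN.1 ▸ M.ground_finite⟩

lemma IsCPT.rkS_add [M.RankFinite] (hN : IsCPT M Z N) (hA : A ⊆ M.E) :
    rkS N A + (rkS M Z - 1) = min (rkS M A + (rkS M Z - 1)) (rkS M (A ∪ Z)) := by
  have := rkS_mono (M := M) (subset_union_right : Z ⊆ A ∪ Z)
  rw [hN.2 A hA]
  omega

lemma IsCPT.rkS_le [M.RankFinite] (hN : IsCPT M Z N) (hA : A ⊆ M.E) : rkS N A ≤ rkS M A := by
  have := hN.rkS_add hA
  omega

lemma IsCPT.rkS_add_le [M.RankFinite] (hN : IsCPT M Z N) (hA : A ⊆ M.E) :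
    rkS N A + (rkS M Z - 1) ≤ rkS M (A ∪ Z) := by
  have := hN.rkS_add hA
  omega

lemma IsCPT.rkS_eq_or [M.RankFinite] (hN : IsCPT M Z N) (hA : A ⊆ M.E) :
    rkS M A = rkS N A ∨ rkS M (A ∪ Z) = rkS N A + (rkS M Z - 1) := by
  have := hN.rkS_add hA
  omega

lemma IsCPT.rkS_sdiff_add_le [M.RankFinite] (hN : IsCPT M Z N) (hA : A ⊆ M.E) (hZA : Z ⊆ A) :
    rkS N (A \ Z) + (rkS M Z - 1) ≤ rkS M A := by
  simpa only [sdiff_union_of_subset hZA] using hN.rkS_add_le (A := A \ Z) (sdiff_subset.trans hA)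

lemma rkS_add_one_le_of_isFlat [M.RankFinite] (hZ : M.IsFlat Z) (hZA : Z ⊆ A) (hA : A ⊆ M.E)
    (hne : (A \ Z).Nonempty) : rkS M Z + 1 ≤ rkS M A := by
  obtain ⟨x, hxA, hxZ⟩ := hne
  rw [← rkS_insert_of_notMem_closure ⟨hA hxA, by rwa [hZ.closure]⟩]
  exact rkS_mono (insert_subset hxA hZA)

theorem IsCPT.degen_restrict_sdiff [M.Finite] (hN : IsCPT M Z N) (hZ : M.IsFlat Z) {L : Set α}
    {t l : ℕ} (F : Fin t → Set α) (hFE : ∀ c, F c ⊆ M.E) (hF2 : ∀ c, 2 ≤ rkS M (F c))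
    (hcov : L ⊆ ⋃ c, F c) (hsum : ∑ c, (rkS M (F c) - 1) ≤ l - 1) {j : Fin t} (hZF : Z ⊆ F j) :
    Degen ((N ↾ (M.E \ Z)) ↾ (L \ Z)) (l - rkS M Z + 1) := by
  have := hN.finite
  set P := (N ↾ (M.E \ Z)) ↾ (L \ Z)
  by_cases hP : rk P ≤ 1
  · exact Or.inl hP
  -- the piece `F j \ Z` has lost `r(Z) - 1` in rank, which pays for the whole cover of `L \ Z`
  have hcost : ∀ c, (if (F c \ Z).Nonempty then max (rkS P (F c \ Z) - 1) 1 else 0) +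
      (if c = j then rkS M Z - 1 else 0) ≤ rkS M (F c) - 1 := by
    intro c
    have hPN : rkS P (F c \ Z) ≤ rkS N (F c \ Z) :=
      (rkS_restrict_le _ _).trans (rkS_restrict_le _ _)
    have hNM : rkS N (F c \ Z) ≤ rkS M (F c) :=
      (hN.rkS_le (sdiff_subset.trans (hFE c))).trans (rkS_mono sdiff_subset)
    have := hF2 c
    split_ifs with hne hcj hcj
    · subst hcj
      have := rkS_add_one_le_of_isFlat hZ hZF (hFE c) hne
      have := hN.rkS_sdiff_add_le (hFE c) hZF
      omega
    · omega
    · subst hcj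
      have := rkS_mono (M := M) hZF
      omega
    · omega
  refine degen_of_cover_of_two_le_rk (by omega) {c | (F c \ Z).Nonempty} (fun c => F c \ Z)
    (fun x hx => ?_) ?_
  · obtain ⟨c, hxc⟩ := mem_iUnion.1 (hcov hx.1)
    exact mem_iUnion₂.2 ⟨c, Finset.mem_filter.2 ⟨Finset.mem_univ c, x, hxc, hx.2⟩, hxc, hx.2⟩
  · have h := Finset.sum_le_sum fun c (_ : c ∈ Finset.univ) => hcost c
    rw [Finset.sum_add_distrib, Finset.sum_ite_eq', if_pos (Finset.mem_univ j)] at h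
    rw [Finset.sum_filter]
    omega

lemma IsCPT.rkS_union_le_of_rkS_le_one [M.RankFinite] (hN : IsCPT M Z N) (hA : A ⊆ M.E)
    (h : rkS N A ≤ 1) : rkS M (A ∪ Z) ≤ rkS M Z + 1 := by
  have := hN.rkS_add hA
  have := rkS_union_le (M := M) A Z
  omega

lemma IsCPT.rkS_union_biUnion_le_of_rkS_ne [M.RankFinite] (hN : IsCPT M Z N)
    (hZ : 1 ≤ rkS M Z) {ι : Type*} (G : ι → Set α) (s : Finset ι) (hG : ∀ c ∈ s, G c ⊆ M.E)
    (hdrop : ∀ c ∈ s, rkS M (G c) ≠ rkS N (G c)) :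
    rkS M (Z ∪ ⋃ c ∈ s, G c) ≤ rkS M Z + ∑ c ∈ s, (rkS N (G c) - 1) := by
  refine (rkS_union_biUnion_le Z G s).trans (Nat.add_le_add_left (Finset.sum_le_sum ?_) _)
  intro c hc
  rcases hN.rkS_eq_or (hG c hc) with h | h
  · exact absurd h (hdrop c hc)
  · rw [union_comm, h]
    omega

/-- The pieces whose rank drops in `N` are merged with `Z` into a single piece. -/
lemma IsCPT.degen_union_of_cover [M.Finite] (hN : IsCPT M Z N) (hZ2 : 2 ≤ rkS M Z)
    {Y : Set α} (hYE : Y ⊆ M.E) {t l : ℕ} (F : Fin t → Set α) (hFY : ∀ c, F c ⊆ Y)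
    (hF2 : ∀ c, 2 ≤ rkS N (F c)) (hcov : Y ⊆ ⋃ c, F c) (hl : rkS M Z ≤ l)
    (hsum : ∑ c, (rkS N (F c) - 1) ≤ l - rkS M Z) : Degen (M ↾ (Y ∪ Z)) l := by
  set sk := ({c | rkS M (F c) = rkS N (F c)} : Finset (Fin t))
  set ns := ({c | rkS M (F c) ≠ rkS N (F c)} : Finset (Fin t))
  have hB := hN.rkS_union_biUnion_le_of_rkS_ne (by omega) F ns
    (fun c _ => (hFY c).trans hYE) fun c hc => (Finset.mem_filter.1 hc).2
  set B := Z ∪ ⋃ c ∈ ns, F c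
  have hBYZ : B ⊆ Y ∪ Z :=
    union_subset subset_union_right (iUnion₂_subset fun c _ => (hFY c).trans subset_union_left)
  have hrP : ∀ A ⊆ Y ∪ Z, rkS (M ↾ (Y ∪ Z)) A = rkS M A := fun A hA =>
    rkS_restrict_of_subset _ hA
  have hsk : ∀ c ∈ sk, rkS (M ↾ (Y ∪ Z)) (F c) = rkS N (F c) := fun c hc => by
    rw [hrP _ ((hFY c).trans subset_union_left), (Finset.mem_filter.1 hc).2]
  refine degen_of_cover (Finset.insertNone sk) (fun o => o.elim B F) (fun o ho => ?_)
    (fun x hx => ?_) ?_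
  · cases o with
    | none => exact hZ2.trans ((rkS_mono subset_union_left).trans (hrP _ hBYZ).ge)
    | some c => exact (hsk c (Finset.mem_insertNone.1 ho c rfl)).symm ▸ hF2 c
  · rcases hx with hxY | hxZ
    · obtain ⟨c, hxc⟩ := mem_iUnion.1 (hcov hxY)
      by_cases hc : rkS M (F c) = rkS N (F c)
      · exact mem_iUnion₂.2 ⟨some c, by simpa [sk] using hc, hxc⟩
      · exact mem_iUnion₂.2 ⟨none, by simp, Or.inr (mem_iUnion₂.2 ⟨c, by simpa [ns] using hc, hxc⟩)⟩
    · exact mem_iUnion₂.2 ⟨none, by simp, Or.inl hxZ⟩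
  · rw [Finset.sum_insertNone]
    simp only [Option.elim]
    rw [hrP _ hBYZ, Finset.sum_congr rfl fun c hc => congrArg (· - 1) (hsk c hc)]
    have : ∑ c ∈ sk, (rkS N (F c) - 1) + ∑ c ∈ ns, (rkS N (F c) - 1) =
        ∑ c, (rkS N (F c) - 1) :=
      Finset.sum_filter_add_sum_filter_not _ _ _
    omega

theorem IsCPT.degenSet_union [M.Finite] (hN : IsCPT M Z N) (hZ2 : 2 ≤ rkS M Z) {Y : Set α}
    (hY : Y ⊆ M.E \ Z) {l : ℕ} (hl : rkS M Z < l)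
    (hdeg : DegenSet (N ↾ (M.E \ Z)) Y (l - rkS M Z + 1)) : DegenSet M (Y ∪ Z) l := by
  have hYE : Y ⊆ M.E := hY.trans sdiff_subset
  have hrQ : ∀ A ⊆ Y, rkS ((N ↾ (M.E \ Z)) ↾ Y) A = rkS N A := fun A hA => by
    rw [rkS_restrict_of_subset _ hA, rkS_restrict_of_subset _ (hA.trans hY)]
  rcases hdeg with hle | ⟨t, F, hF, hcov, hsum⟩
  · rw [rk, Matroid.restrict_ground_eq, hrQ _ subset_rfl] at hle
    exact degenSet_of_rkS_le ((hN.rkS_union_le_of_rkS_le_one hYE hle).trans hl)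
  have hFY : ∀ c, F c ⊆ Y := fun c => (hF c).1.subset_ground
  simp only [hrQ _ (hFY _)] at hF hsum
  exact hN.degen_union_of_cover hZ2 hYE F hFY (fun c => (hF c).2) hcov hl.le (by omega)

end CPT

lemma exists_lt_ncard_inter {ι : Type*} [Fintype ι] {S : Set α} (G : ι → Set α)
    (hS : S ⊆ ⋃ c, G c) {m : ℕ} (h : Fintype.card ι * m < S.ncard) :
    ∃ c, m < (S ∩ G c).ncard := by
  by_contra! hle
  have hsum : S.ncard ≤ ∑ c, (S ∩ G c).ncard := by
    conv_lhs => rw [← inter_eq_left.2 hS, inter_iUnion]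
    exact ncard_iUnion_le_of_fintype _
  have := Finset.sum_le_sum fun c (_ : c ∈ Finset.univ) => hle c
  simp only [Finset.sum_const, Finset.card_univ, smul_eq_mul] at this
  omega

lemma DegenSet.exists_cover {M : Matroid α} [M.RankFinite] {L : Set α} {l : ℕ}
    (h : DegenSet M L l) (hL : 2 ≤ rkS M L) :
    ∃ t, ∃ F : Fin t → Set α, (∀ c, (M ↾ L).IsFlat (F c)) ∧ (∀ c, 2 ≤ rkS M (F c)) ∧
      L ⊆ ⋃ c, F c ∧ ∑ c, (rkS M (F c) - 1) ≤ l - 1 ∧ t ≤ l - 1 := by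
  rcases h with h | ⟨t, F, hF, hcov, hsum⟩
  · rw [rk, Matroid.restrict_ground_eq, rkS_restrict_of_subset _ subset_rfl] at h
    omega
  have hr : ∀ c, rkS (M ↾ L) (F c) = rkS M (F c) := fun c =>
    rkS_restrict_of_subset M (hF c).1.subset_ground
  simp only [hr] at hF hsum
  have ht : ∑ _c : Fin t, 1 ≤ ∑ c, (rkS M (F c) - 1) :=
    Finset.sum_le_sum fun c _ => by have := (hF c).2; omega
  simp only [Finset.sum_const, Finset.card_univ, Fintype.card_fin, smul_eq_mul, mul_one] at ht
  exact ⟨t, F, fun c => (hF c).1, fun c => (hF c).2, hcov, hsum, ht.trans hsum⟩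

lemma exists_superset_of_cover {M : Matroid α} [M.Finite] (hs : SimpleM M) {W Z L : Set α}
    (hZL : Z ⊆ L) (hL : L ⊆ M.E)
    (hopt : ∀ A ⊆ Z, 2 ≤ rkS M A → rkS M A < rkS M Z → A.ncard ≤ W.ncard)
    {t : ℕ} (F : Fin t → Set α) (hF : ∀ c, (M ↾ L).IsFlat (F c)) (hcov : L ⊆ ⋃ c, F c)
    (hcard : t * (W.ncard + 1) < Z.ncard) : ∃ j, Z ⊆ F j := by
  obtain ⟨j, hj⟩ := exists_lt_ncard_inter F (hZL.trans hcov) (by simpa using hcard)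
  have hZE := hZL.trans hL
  have h2 := hs.two_le_rkS (A := Z ∩ F j) (inter_subset_left.trans hZE) (by omega)
  have hrk : rkS M Z ≤ rkS M (Z ∩ F j) := by
    by_contra! hlt
    have := hopt _ inter_subset_left h2 hlt
    omega
  refine ⟨j, fun x hx => ?_⟩
  have hcl := subset_closure_of_rkS_le inter_subset_left hZE hrk hx
  rw [← (hF j).closure, Matroid.restrict_closure_eq (R := L) _ (hF j).subset_ground hL]
  exact ⟨M.closure_subset_closure inter_subset_right hcl, hZL hx⟩

lemma monotoneOn_of_chain {X : ℕ → Set α} {k : ℕ}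
    (hchain : ∀ i, 2 ≤ i → i ≤ k → X i ⊆ X (i + 1)) : MonotoneOn X (Icc 2 (k + 1)) :=
  monotoneOn_of_le_succ ordConnected_Icc fun a _ ha ha' =>
    hchain a ha.1 (by simp only [Order.succ_eq_add_one, mem_Icc] at ha'; omega)

theorem stmt19_general (k : ℕ) (M : Matroid α) [M.Finite] (hs : SimpleM M) (X : ℕ → Set α)
    (hXtop : X (k + 1) = M.E)
    (hchain : ∀ i, 2 ≤ i → i ≤ k → X i ⊆ X (i + 1))
    (hdeg : ∀ i, 2 ≤ i → i ≤ k → DegenSet M (X i) i)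
    (hopt : ∀ i, 2 ≤ i → i ≤ k → ∀ Y ⊆ X (i + 1), DegenSet M Y i →
      Y.ncard ≤ (X i).ncard)
    (i : ℕ) (hi2 : 2 ≤ i)
    (hflat : M.IsFlat (X i)) (hrk : rkS M (X i) = i)
    (hsmall : k * ((X (i - 1)).ncard + 1) < (X i).ncard)
    (N : Matroid α) (hN : IsCPT M (X i) N) :
    ∀ l, i + 1 ≤ l → l ≤ k →
      DegenSet (N.restrict (M.E \ X i)) (X l \ X i) (l - i + 1) ∧
      ∀ Y ⊆ X (l + 1) \ X i, DegenSet (N.restrict (M.E \ X i)) Y (l - i + 1) →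
        Y.ncard ≤ (X l \ X i).ncard := by
  intro l hil hlk
  have hmono := monotoneOn_of_chain hchain
  have hXil : X i ⊆ X l := hmono ⟨hi2, by omega⟩ ⟨by omega, by omega⟩ (by omega)
  have hXl1E : X (l + 1) ⊆ M.E := hXtop ▸ hmono ⟨by omega, by omega⟩ ⟨by omega, le_rfl⟩ (by omega)
  have hXlE : X l ⊆ M.E := (hchain l (by omega) hlk).trans hXl1E
  refine ⟨?_, fun Y hY hYdeg => ?_⟩
  · obtain ⟨t, F, hF, hF2, hcov, hsum, ht⟩ :=
      (hdeg l (by omega) hlk).exists_cover (by have := rkS_mono (M := M) hXil; omega)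
    obtain ⟨j, hj⟩ := exists_superset_of_cover hs hXil hXlE
      (fun A hA h2 hlt => hopt (i - 1) (by omega) (by omega) A
        (by rwa [Nat.sub_add_cancel (by omega)]) (degenSet_of_rkS_le (by omega)))
      F hF hcov ((Nat.mul_le_mul_right _ (by omega)).trans_lt hsmall)
    have h := hN.degen_restrict_sdiff hflat F (fun c => (hF c).subset_ground.trans hXlE) hF2 hcov
      hsum hj
    rwa [hrk] at h
  · have hYE : Y ⊆ M.E \ X i := hY.trans (sdiff_subset_sdiff_left hXl1E)
    have hXifin : (X i).Finite := M.ground_finite.subset (hXil.trans hXlE)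
    have hcard := hopt l (by omega) hlk (Y ∪ X i)
      (union_subset (hY.trans sdiff_subset) (hXil.trans (hchain l (by omega) hlk)))
      (hN.degenSet_union (by omega) hYE (by omega) (by rwa [hrk]))
    rw [ncard_union_eq (disjoint_of_subset_left hYE disjoint_sdiff_left)
      (M.ground_finite.subset (hYE.trans sdiff_subset)) hXifin] at hcard
    rw [ncard_sdiff hXil hXifin]
    omega

/-- Complete principal truncation of the rank-`i` flat `Xᵢ` followed by deleting `Xᵢ` yields an
optimal `(k+1-i)`-stratification `(X_{i+1} \ Xᵢ, …, X_k \ Xᵢ)`. -/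
theorem stmt19 (k : ℕ) (hk : 2 ≤ k) (M : Matroid α) [M.Finite] (hs : SimpleM M)
    (hr : rk M = k + 1) (X : ℕ → Set α)
    (hX1 : X 1 = ∅) (hXtop : X (k + 1) = M.E)
    (hchain : ∀ i, 2 ≤ i → i ≤ k → X i ⊆ X (i + 1))
    (hdeg : ∀ i, 2 ≤ i → i ≤ k → DegenSet M (X i) i)
    (hopt : ∀ i, 2 ≤ i → i ≤ k → ∀ Y ⊆ X (i + 1), DegenSet M Y i →
      Y.ncard ≤ (X i).ncard)
    (i : ℕ) (hi2 : 2 ≤ i) (hik : i ≤ k - 1)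
    (hflat : M.IsFlat (X i)) (hrk : rkS M (X i) = i)
    (hsmall : k * ((X (i - 1)).ncard + 1) < (X i).ncard)
    (N : Matroid α) (hN : IsCPT M (X i) N) :
    ∀ l, i + 1 ≤ l → l ≤ k →
      DegenSet (N.restrict (M.E \ X i)) (X l \ X i) (l - i + 1) ∧
      ∀ Y ⊆ X (l + 1) \ X i, DegenSet (N.restrict (M.E \ X i)) Y (l - i + 1) →
        Y.ncard ≤ (X l \ X i).ncard :=
  stmt19_general k M hs X hXtop hchain hdeg hopt i hi2 hflat hrk hsmall N hN

end MatroidPaper
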